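/- arXiv:1401.6920 — 2 statements merged into one kernel-verified Lean document; each statement's English description precedes it below -/
import Mathlib

section
/- The Ricci tensor of the Gödel metric is not of Codazzi type: at every point of ℝ⁴ there exist indices i, j, k with S_{ij,k} ≠ S_{kj,i} (for instance S₂₂,₁ = e^{2x¹} while S₁₂,₂ = −(1/2)e^{2x¹}). -/
noncomputable section

open scoped BigOperators

/-- A point of `ℝⁿ`. -/
abbrev Pt (n : ℕ) := Fin n → ℝ
/-- A (0,2)-tensor field on `ℝⁿ`, given by its components. -/
abbrev Ten2 (n : ℕ) := Pt n → Fin n → Fin n → ℝ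
/-- A (0,4)-tensor field on `ℝⁿ`, given by its components. -/
abbrev Ten4 (n : ℕ) := Pt n → Fin n → Fin n → Fin n → Fin n → ℝ

variable {n : ℕ}

/-- Partial derivative `∂ᵢ f` at `x`. -/
def pderiv (i : Fin n) (f : Pt n → ℝ) (x : Pt n) : ℝ :=
  fderiv ℝ f x (Pi.single i 1)

/-- Components `g^{ij}` of the inverse of the metric. -/
def ginv (g : Ten2 n) (x : Pt n) (i j : Fin n) : ℝ :=
  (Matrix.of (g x))⁻¹ i j

/-- Christoffel symbols of the second kind, `Γ^h_{ij}` as a function of the point. -/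
def christoffel (g : Ten2 n) (h i j : Fin n) (x : Pt n) : ℝ :=
  (1/2) * ∑ l, ginv g x h l *
    (pderiv i (fun y => g y l j) x + pderiv j (fun y => g y i l) x - pderiv l (fun y => g y i j) x)

/-- Curvature components `R^h_{ijk}`. -/
def curvUp (g : Ten2 n) (h i j k : Fin n) (x : Pt n) : ℝ :=
  pderiv j (christoffel g h i k) x - pderiv k (christoffel g h i j) x
    + ∑ l, christoffel g h j l x * christoffel g l i k x
    - ∑ l, christoffel g h k l x * christoffel g l i j x

/-- The (0,4) Riemann–Christoffel curvature tensor `R_{hijk} = g_{hl} R^l_{ijk}`. -/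
def riemann (g : Ten2 n) : Ten4 n := fun x h i j k => ∑ l, g x h l * curvUp g l i j k x

/-- The Ricci tensor `S_{ij} = R^k_{ikj}`. -/
def ricci (g : Ten2 n) : Ten2 n := fun x i j => ∑ k, curvUp g k i k j x

/-- The scalar curvature `κ = g^{ij} S_{ij}`. -/
def scalarCurv (g : Ten2 n) (x : Pt n) : ℝ := ∑ i, ∑ j, ginv g x i j * ricci g x i j

/-- Components `S_{ij,k}` of the covariant derivative of the Ricci tensor. -/
def ricciCov (g : Ten2 n) (x : Pt n) (i j k : Fin n) : ℝ :=
  pderiv k (fun y => ricci g y i j) x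
    - ∑ l, christoffel g l k i x * ricci g x l j
    - ∑ l, christoffel g l k j x * ricci g x i l

/-- The Kulkarni–Nomizu product of two symmetric (0,2)-tensors. -/
def kn (A B : Ten2 n) : Ten4 n := fun x X1 X2 X3 X4 =>
  A x X1 X4 * B x X2 X3 + A x X2 X3 * B x X1 X4 - A x X1 X3 * B x X2 X4 - A x X2 X4 * B x X1 X3

/-- The Gaussian curvature tensor `G = (1/2) g ∧ g`. -/
def Gten (g : Ten2 n) : Ten4 n := fun x i j k l => (1/2) * kn g g x i j k l

/-- The Weyl conformal curvature tensor
`C = R − (1/(n−2)) g∧S + (κ/((n−2)(n−1))) G`. -/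
def weyl (g : Ten2 n) : Ten4 n := fun x h i j k =>
  riemann g x h i j k - (1/((n:ℝ)-2)) * kn g (ricci g) x h i j k
    + (scalarCurv g x / (((n:ℝ)-2)*((n:ℝ)-1))) * Gten g x h i j k

/-- The conharmonic curvature tensor `conh(R) = R − (1/(n−2)) g∧S`. -/
def conh (g : Ten2 n) : Ten4 n := fun x h i j k =>
  riemann g x h i j k - (1/((n:ℝ)-2)) * kn g (ricci g) x h i j k

/-- The concircular curvature tensor `K = R − (κ/(n(n−1))) G`. -/
def concirc (g : Ten2 n) : Ten4 n := fun x h i j k =>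
  riemann g x h i j k - (scalarCurv g x / ((n:ℝ)*((n:ℝ)-1))) * Gten g x h i j k

/-- The (0,6)-tensor `T·T'` for (0,4)-tensors `T, T'`: the curvature-type tensor `T`
acts as a derivation (through the endomorphisms `𝒯(X,Y)` with
`g(𝒯(X,Y)Z,W) = T(X,Y,Z,W)`) on the (0,4)-tensor `T'`. -/
def dot44 (g : Ten2 n) (T T' : Ten4 n) :
    Pt n → Fin n → Fin n → Fin n → Fin n → Fin n → Fin n → ℝ :=
  fun x h i j k l m =>
  -(∑ r, ∑ s, ginv g x r s *
    (T x l m h s * T' x r i j k + T x l m i s * T' x h r j k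
      + T x l m j s * T' x h i r k + T x l m k s * T' x h i j r))

/-- The (0,4)-tensor `T·A` for a (0,4)-tensor `T` acting on a (0,2)-tensor `A`. -/
def dot42 (g : Ten2 n) (T : Ten4 n) (A : Ten2 n) :
    Pt n → Fin n → Fin n → Fin n → Fin n → ℝ :=
  fun x i j l m =>
  -(∑ r, ∑ s, ginv g x r s * (T x l m i s * A x r j + T x l m j s * A x i r))

/-- The Tachibana tensor `Q(A,T')` of a symmetric (0,2)-tensor `A`
and a (0,4)-tensor `T'`, built from the endomorphisms `X ∧_A Y`. -/
def tach4 (A : Ten2 n) (T' : Ten4 n) :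
    Pt n → Fin n → Fin n → Fin n → Fin n → Fin n → Fin n → ℝ :=
  fun x h i j k l m =>
  -((A x m h * T' x l i j k - A x l h * T' x m i j k)
    + (A x m i * T' x h l j k - A x l i * T' x h m j k)
    + (A x m j * T' x h i l k - A x l j * T' x h i m k)
    + (A x m k * T' x h i j l - A x l k * T' x h i j m))

/-- The Tachibana tensor `Q(A,B)` of a symmetric (0,2)-tensor `A`
and a (0,2)-tensor `B`. -/
def tach2 (A B : Ten2 n) : Pt n → Fin n → Fin n → Fin n → Fin n → ℝ :=
  fun x i j l m =>
  -((A x m i * B x l j - A x l i * B x m j) + (A x m j * B x i l - A x l j * B x i m))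

/-- The Gödel metric on `ℝ⁴`: `g₁₁ = −a²`, `g₂₂ = (a²/2)e^{2x¹}`, `g₃₃ = −a²`,
`g₄₄ = a²`, `g₂₄ = g₄₂ = a²e^{x¹}`, all other components zero. -/
def godel (a : ℝ) : Ten2 4 := fun x i j =>
  ![![-a^2, 0, 0, 0],
    ![0, a^2/2 * Real.exp (2 * x 0), 0, a^2 * Real.exp (x 0)],
    ![0, 0, -a^2, 0],
    ![0, a^2 * Real.exp (x 0), 0, a^2]] i j

/-!
Every component of the Gödel metric is a constant multiple of `exp (k x¹)`, and so, once the
inverse metric is written down in closed form, are all Christoffel symbols and all Ricci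
components; partial derivatives of such functions are explicit. The Ricci tensor turns out to be
`u ⊗ u` for the 1-form `u = e^{x¹} dx² + dx⁴`, independently of `a`. Since `S₁ⱼ = 0` and
`Γ⁴₁₂ = e^{x¹}/2`, this gives `S₂₂,₁ = ∂₁S₂₂ - 2 Γ⁴₁₂ S₄₂ = e^{2x¹}` but
`S₁₂,₂ = -Γ⁴₂₁ S₄₂ = -e^{2x¹}/2`. Indices in the code start at `0`, so `x¹` is `x 0`.
-/

theorem pderiv_const (c : ℝ) (i : Fin n) (x : Pt n) : pderiv i (fun _ => c) x = 0 := by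
  simp [pderiv]

theorem pderiv_const_mul_exp (c k : ℝ) (i m : Fin n) (x : Pt n) :
    pderiv i (fun y => c * Real.exp (k * y m)) x
      = if i = m then c * k * Real.exp (k * x m) else 0 := by
  have hf := (((hasFDerivAt_apply m x).const_mul k).exp).const_mul c
  rw [pderiv, hf.fderiv]
  by_cases hi : i = m
  · subst hi; simp; ring
  · simp [hi]

theorem pderiv_const_mul_exp_coord (c : ℝ) (i m : Fin n) (x : Pt n) :
    pderiv i (fun y => c * Real.exp (y m)) x = if i = m then c * Real.exp (x m) else 0 := by
  simpa using pderiv_const_mul_exp c 1 i m x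

theorem exp_two_mul_eq_sq (t : ℝ) : Real.exp (2 * t) = Real.exp t ^ 2 := by
  rw [sq, ← Real.exp_add, two_mul]

namespace Godel

def inverseMetric (a : ℝ) (x : Pt 4) : Matrix (Fin 4) (Fin 4) ℝ :=
  ![![-1/a^2, 0, 0, 0],
    ![0, -2/(a^2 * Real.exp (x 0)^2), 0, 2/(a^2 * Real.exp (x 0))],
    ![0, 0, -1/a^2, 0],
    ![0, 2/(a^2 * Real.exp (x 0)), 0, -1/a^2]]

theorem ginv_godel {a : ℝ} (ha : a ≠ 0) (x : Pt 4) (i j : Fin 4) :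
    ginv (godel a) x i j = inverseMetric a x i j := by
  suffices Matrix.of (godel a x) * inverseMetric a x = 1 by rw [ginv, Matrix.inv_eq_right_inv this]
  ext i j
  simp only [Matrix.mul_apply, Fin.sum_univ_four, Matrix.of_apply]
  fin_cases i <;> fin_cases j <;>
    simp [godel, inverseMetric, exp_two_mul_eq_sq] <;>
    field_simp <;> ring

def christoffelCoeff : Fin 4 → Fin 4 → Fin 4 → ℝ :=
  ![![![0, 0, 0, 0], ![0, 1/2, 0, 1/2], ![0, 0, 0, 0], ![0, 1/2, 0, 0]],
    ![![0, 0, 0, -1], ![0, 0, 0, 0], ![0, 0, 0, 0], ![-1, 0, 0, 0]],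
    ![![0, 0, 0, 0], ![0, 0, 0, 0], ![0, 0, 0, 0], ![0, 0, 0, 0]],
    ![![0, 1/2, 0, 1], ![1/2, 0, 0, 0], ![0, 0, 0, 0], ![1, 0, 0, 0]]]

def christoffelExponent : Fin 4 → Fin 4 → Fin 4 → ℝ :=
  ![![![0, 0, 0, 0], ![0, 2, 0, 1], ![0, 0, 0, 0], ![0, 1, 0, 0]],
    ![![0, 0, 0, -1], ![0, 0, 0, 0], ![0, 0, 0, 0], ![-1, 0, 0, 0]],
    ![![0, 0, 0, 0], ![0, 0, 0, 0], ![0, 0, 0, 0], ![0, 0, 0, 0]],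
    ![![0, 1, 0, 0], ![1, 0, 0, 0], ![0, 0, 0, 0], ![0, 0, 0, 0]]]

theorem christoffel_godel {a : ℝ} (ha : a ≠ 0) (h i j : Fin 4) :
    christoffel (godel a) h i j
      = fun x => christoffelCoeff h i j * Real.exp (christoffelExponent h i j * x 0) := by
  funext x
  have hx := exp_two_mul_eq_sq (x 0)
  simp only [christoffel, Fin.sum_univ_four, ginv_godel ha]
  fin_cases h <;> fin_cases i <;> fin_cases j <;>
    simp [inverseMetric, godel, christoffelCoeff, christoffelExponent, pderiv_const_mul_exp,
      pderiv_const_mul_exp_coord, pderiv_const, hx, Real.exp_neg] <;>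
    field_simp <;> ring

def velocity (x : Pt 4) : Fin 4 → ℝ := ![0, Real.exp (x 0), 0, 1]

theorem ricci_godel {a : ℝ} (ha : a ≠ 0) :
    ricci (godel a) = fun x i j => velocity x i * velocity x j := by
  funext x i j
  have hx := exp_two_mul_eq_sq (x 0)
  simp only [ricci, curvUp, Fin.sum_univ_four, christoffel_godel ha, pderiv_const_mul_exp]
  fin_cases i <;> fin_cases j <;>
    simp [christoffelCoeff, christoffelExponent, velocity, hx, Real.exp_neg] <;>
    field_simp <;> ring

theorem ricciCov_godel_one_one_zero {a : ℝ} (ha : a ≠ 0) (x : Pt 4) :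
    ricciCov (godel a) x 1 1 0 = Real.exp (2 * x 0) := by
  have hS : (fun y => ricci (godel a) y 1 1) = fun y => 1 * Real.exp (2 * y 0) := by
    funext y
    simp [ricci_godel ha, velocity, exp_two_mul_eq_sq, sq]
  rw [ricciCov, hS, pderiv_const_mul_exp]
  simp only [Fin.sum_univ_four, christoffel_godel ha, ricci_godel ha]
  simp only [↓reduceIte, one_mul, Fin.isValue, exp_two_mul_eq_sq, christoffelCoeff, one_div,
    Matrix.cons_val', Matrix.cons_val_zero, Matrix.cons_val_fin_one, Matrix.cons_val_one,
    christoffelExponent, zero_mul, Real.exp_zero, mul_one, velocity, mul_zero, add_zero,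
    Matrix.cons_val, zero_add]
  ring

theorem ricciCov_godel_zero_one_one {a : ℝ} (ha : a ≠ 0) (x : Pt 4) :
    ricciCov (godel a) x 0 1 1 = -(1/2) * Real.exp (2 * x 0) := by
  simp only [ricciCov, Fin.sum_univ_four, christoffel_godel ha, ricci_godel ha]
  simp only [Fin.isValue, velocity, Matrix.cons_val_zero, Matrix.cons_val_one, zero_mul,
    pderiv_const, christoffelCoeff, one_div, Matrix.cons_val', Matrix.cons_val_fin_one,
    christoffelExponent, Real.exp_zero, mul_one, mul_zero, add_zero, Matrix.cons_val, one_mul,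
    zero_add, zero_sub, exp_two_mul_eq_sq, sub_zero, neg_mul, neg_inj]
  ring

end Godel

/-- The Ricci tensor of the Gödel metric is not of Codazzi type:
at every point there are indices `i, j, k` with `S_{ij,k} ≠ S_{kj,i}`;
for instance `S₂₂,₁ = e^{2x¹}` while `S₁₂,₂ = −(1/2)e^{2x¹}`. -/
theorem godel_ricci_not_codazzi (a : ℝ) (ha : 0 < a) :
    ∀ x : Pt 4,
      (ricciCov (godel a) x 1 1 0 = Real.exp (2 * x 0) ∧
        ricciCov (godel a) x 0 1 1 = -(1/2) * Real.exp (2 * x 0)) ∧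
      ∃ i j k : Fin 4, ricciCov (godel a) x i j k ≠ ricciCov (godel a) x k j i := by
  intro x
  have h110 := Godel.ricciCov_godel_one_one_zero ha.ne' x
  have h011 := Godel.ricciCov_godel_zero_one_one ha.ne' x
  refine ⟨⟨h110, h011⟩, 1, 1, 0, ?_⟩
  rw [h110, h011]
  have := Real.exp_pos (2 * x 0)
  intro h
  linarith
end
end

section
/- For the Gödel metric, the 1-form ω with components ω = (0, a e^{x¹}, 0, a) is Riemann compatible and Weyl compatible: at every point of ℝ⁴, ω_r g^{rs}(ω_h R_{sijk} + ω_j R_{sikh} + ω_k R_{sihj}) = 0 for all indices h, i, j, k, and the same identity holds with the Weyl conformal curvature tensor C in place of R. -/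
noncomputable section

open scoped BigOperators

variable {n : ℕ}

/-- The 1-form `ω = (0, a e^{x¹}, 0, a)`. -/
def godelOmega (a : ℝ) (x : Pt 4) : Fin 4 → ℝ := ![0, a * Real.exp (x 0), 0, a]


set_option linter.unreachableTactic false
set_option linter.unusedTactic false
set_option linter.unnecessarySeqFocus false

lemma pderiv_cexp (c k : ℝ) (i : Fin 4) (x : Pt 4) :
    pderiv i (fun y : Pt 4 => c * Real.exp (k * y 0)) x
      = c * k * Real.exp (k * x 0) * (Pi.single i 1 : Pt 4) 0 := by
  have h1 : HasFDerivAt (fun y : Pt 4 => y 0)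
      (ContinuousLinearMap.proj (R := ℝ) (φ := fun _ : Fin 4 => ℝ) 0) x :=
    hasFDerivAt_apply 0 x
  have h4 := ((h1.const_mul k).exp).const_mul c
  rw [pderiv, h4.fderiv]
  simp only [ContinuousLinearMap.smul_apply, ContinuousLinearMap.proj_apply, smul_eq_mul]
  ring

lemma pderiv_of_eq_cexp {f : Pt 4 → ℝ} (c k : ℝ) (hf : ∀ y, f y = c * Real.exp (k * y 0))
    (i : Fin 4) (x : Pt 4) :
    pderiv i f x = c * k * Real.exp (k * x 0) * (Pi.single i 1 : Pt 4) 0 := by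
  rw [show f = fun y : Pt 4 => c * Real.exp (k * y 0) from funext hf]
  exact pderiv_cexp c k i x

lemma pd_g (a : ℝ) (l i j : Fin 4) (x : Pt 4) :
    pderiv l (fun y => godel a y i j) x =
      (Pi.single l 1 : Pt 4) 0 *
      ![![0,0,0,0],
        ![0, a^2 * Real.exp (2 * x 0), 0, a^2 * Real.exp (x 0)],
        ![0,0,0,0],
        ![0, a^2 * Real.exp (x 0), 0, 0]] i j := by
  fin_cases i <;> fin_cases j
  · rw [pderiv_of_eq_cexp (-(a^2)) 0 (fun y => by norm_num [godel])]
    norm_num <;> ring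
  · rw [pderiv_of_eq_cexp 0 0 (fun y => by norm_num [godel])]
    norm_num <;> ring
  · rw [pderiv_of_eq_cexp 0 0 (fun y => by norm_num [godel])]
    norm_num <;> ring
  · rw [pderiv_of_eq_cexp 0 0 (fun y => by norm_num [godel])]
    norm_num <;> ring
  · rw [pderiv_of_eq_cexp 0 0 (fun y => by norm_num [godel])]
    norm_num <;> ring
  · rw [pderiv_of_eq_cexp (a^2/2) 2 (fun y => by norm_num [godel])]
    norm_num <;> ring
  · rw [pderiv_of_eq_cexp 0 0 (fun y => by norm_num [godel])]
    norm_num <;> ring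
  · rw [pderiv_of_eq_cexp (a^2) 1 (fun y => by norm_num [godel])]
    norm_num <;> ring
  · rw [pderiv_of_eq_cexp 0 0 (fun y => by norm_num [godel])]
    norm_num <;> ring
  · rw [pderiv_of_eq_cexp 0 0 (fun y => by norm_num [godel])]
    norm_num <;> ring
  · rw [pderiv_of_eq_cexp (-(a^2)) 0 (fun y => by norm_num [godel])]
    norm_num <;> ring
  · rw [pderiv_of_eq_cexp 0 0 (fun y => by norm_num [godel])]
    norm_num <;> ring
  · rw [pderiv_of_eq_cexp 0 0 (fun y => by norm_num [godel])]
    norm_num <;> ring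
  · rw [pderiv_of_eq_cexp (a^2) 1 (fun y => by norm_num [godel])]
    norm_num <;> ring
  · rw [pderiv_of_eq_cexp 0 0 (fun y => by norm_num [godel])]
    norm_num <;> ring
  · rw [pderiv_of_eq_cexp (a^2) 0 (fun y => by norm_num [godel])]
    norm_num <;> ring

def giT (a : ℝ) (x : Pt 4) : Fin 4 → Fin 4 → ℝ :=
  ![![-(1/a^2), 0, 0, 0],
    ![0, -(2/(a^2 * Real.exp (x 0) * Real.exp (x 0))), 0, 2/(a^2 * Real.exp (x 0))],
    ![0, 0, -(1/a^2), 0],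
    ![0, 2/(a^2 * Real.exp (x 0)), 0, -(1/a^2)]]

lemma exp_two (t : ℝ) : Real.exp (2 * t) = Real.exp t * Real.exp t := by
  rw [two_mul, Real.exp_add]

lemma ginv_godel {a : ℝ} (ha : a ≠ 0) (x : Pt 4) (i j : Fin 4) :
    ginv (godel a) x i j = giT a x i j := by
  have h : Matrix.of (godel a x) * Matrix.of (fun i j => giT a x i j) = 1 := by
    ext i j
    fin_cases i <;> fin_cases j <;>
      simp [Matrix.mul_apply, Fin.sum_univ_four, godel, giT, exp_two,
        Matrix.one_apply, Matrix.vecHead, Matrix.vecTail] <;>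
      field_simp <;> ring
  rw [ginv, Matrix.inv_eq_right_inv h]
  rfl

def Gam (h i j : Fin 4) : Pt 4 → ℝ := fun x =>
  ![![![0,0,0,0],![0, Real.exp (2*x 0)/2, 0, Real.exp (x 0)/2],![0,0,0,0],![0, Real.exp (x 0)/2, 0, 0]],
    ![![0,0,0,-Real.exp (-x 0)],![0,0,0,0],![0,0,0,0],![-Real.exp (-x 0),0,0,0]],
    ![![0,0,0,0],![0,0,0,0],![0,0,0,0],![0,0,0,0]],
    ![![0, Real.exp (x 0)/2, 0, 1],![Real.exp (x 0)/2,0,0,0],![0,0,0,0],![1,0,0,0]]] h i j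

set_option maxHeartbeats 4000000 in
lemma christoffel_godel {a : ℝ} (ha : a ≠ 0) (h i j : Fin 4) :
    christoffel (godel a) h i j = Gam h i j := by
  funext x
  fin_cases h <;> fin_cases i <;> fin_cases j <;>
    (simp only [christoffel, Fin.sum_univ_four, ginv_godel ha, pd_g];
     simp [giT, Gam, exp_two, Pi.single_apply, Matrix.vecHead, Matrix.vecTail, Real.exp_neg];
     try field_simp;
     try ring)

def DG (h i j : Fin 4) (x : Pt 4) : ℝ :=
  ![![![0,0,0,0],![0, Real.exp (2*x 0), 0, Real.exp (x 0)/2],![0,0,0,0],![0, Real.exp (x 0)/2, 0, 0]],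
    ![![0,0,0,Real.exp (-x 0)],![0,0,0,0],![0,0,0,0],![Real.exp (-x 0),0,0,0]],
    ![![0,0,0,0],![0,0,0,0],![0,0,0,0],![0,0,0,0]],
    ![![0, Real.exp (x 0)/2, 0, 0],![Real.exp (x 0)/2,0,0,0],![0,0,0,0],![0,0,0,0]]] h i j

set_option maxHeartbeats 4000000 in
lemma pderiv_Gam (m h i j : Fin 4) (x : Pt 4) :
    pderiv m (Gam h i j) x = (Pi.single m 1 : Pt 4) 0 * DG h i j x := by
  fin_cases h <;> fin_cases i <;> fin_cases j
  · rw [pderiv_of_eq_cexp 0 0 (fun y => by norm_num [Gam] <;> ring)]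
    norm_num [DG] <;> ring
  · rw [pderiv_of_eq_cexp 0 0 (fun y => by norm_num [Gam] <;> ring)]
    norm_num [DG] <;> ring
  · rw [pderiv_of_eq_cexp 0 0 (fun y => by norm_num [Gam] <;> ring)]
    norm_num [DG] <;> ring
  · rw [pderiv_of_eq_cexp 0 0 (fun y => by norm_num [Gam] <;> ring)]
    norm_num [DG] <;> ring
  · rw [pderiv_of_eq_cexp 0 0 (fun y => by norm_num [Gam] <;> ring)]
    norm_num [DG] <;> ring
  · rw [pderiv_of_eq_cexp (1/2) 2 (fun y => by norm_num [Gam] <;> ring)]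
    norm_num [DG] <;> ring
  · rw [pderiv_of_eq_cexp 0 0 (fun y => by norm_num [Gam] <;> ring)]
    norm_num [DG] <;> ring
  · rw [pderiv_of_eq_cexp (1/2) 1 (fun y => by norm_num [Gam] <;> ring)]
    norm_num [DG] <;> ring
  · rw [pderiv_of_eq_cexp 0 0 (fun y => by norm_num [Gam] <;> ring)]
    norm_num [DG] <;> ring
  · rw [pderiv_of_eq_cexp 0 0 (fun y => by norm_num [Gam] <;> ring)]
    norm_num [DG] <;> ring
  · rw [pderiv_of_eq_cexp 0 0 (fun y => by norm_num [Gam] <;> ring)]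
    norm_num [DG] <;> ring
  · rw [pderiv_of_eq_cexp 0 0 (fun y => by norm_num [Gam] <;> ring)]
    norm_num [DG] <;> ring
  · rw [pderiv_of_eq_cexp 0 0 (fun y => by norm_num [Gam] <;> ring)]
    norm_num [DG] <;> ring
  · rw [pderiv_of_eq_cexp (1/2) 1 (fun y => by norm_num [Gam] <;> ring)]
    norm_num [DG] <;> ring
  · rw [pderiv_of_eq_cexp 0 0 (fun y => by norm_num [Gam] <;> ring)]
    norm_num [DG] <;> ring
  · rw [pderiv_of_eq_cexp 0 0 (fun y => by norm_num [Gam] <;> ring)]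
    norm_num [DG] <;> ring
  · rw [pderiv_of_eq_cexp 0 0 (fun y => by norm_num [Gam] <;> ring)]
    norm_num [DG] <;> ring
  · rw [pderiv_of_eq_cexp 0 0 (fun y => by norm_num [Gam] <;> ring)]
    norm_num [DG] <;> ring
  · rw [pderiv_of_eq_cexp 0 0 (fun y => by norm_num [Gam] <;> ring)]
    norm_num [DG] <;> ring
  · rw [pderiv_of_eq_cexp (-1) (-1) (fun y => by norm_num [Gam] <;> ring)]
    norm_num [DG] <;> ring
  · rw [pderiv_of_eq_cexp 0 0 (fun y => by norm_num [Gam] <;> ring)]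
    norm_num [DG] <;> ring
  · rw [pderiv_of_eq_cexp 0 0 (fun y => by norm_num [Gam] <;> ring)]
    norm_num [DG] <;> ring
  · rw [pderiv_of_eq_cexp 0 0 (fun y => by norm_num [Gam] <;> ring)]
    norm_num [DG] <;> ring
  · rw [pderiv_of_eq_cexp 0 0 (fun y => by norm_num [Gam] <;> ring)]
    norm_num [DG] <;> ring
  · rw [pderiv_of_eq_cexp 0 0 (fun y => by norm_num [Gam] <;> ring)]
    norm_num [DG] <;> ring
  · rw [pderiv_of_eq_cexp 0 0 (fun y => by norm_num [Gam] <;> ring)]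
    norm_num [DG] <;> ring
  · rw [pderiv_of_eq_cexp 0 0 (fun y => by norm_num [Gam] <;> ring)]
    norm_num [DG] <;> ring
  · rw [pderiv_of_eq_cexp 0 0 (fun y => by norm_num [Gam] <;> ring)]
    norm_num [DG] <;> ring
  · rw [pderiv_of_eq_cexp (-1) (-1) (fun y => by norm_num [Gam] <;> ring)]
    norm_num [DG] <;> ring
  · rw [pderiv_of_eq_cexp 0 0 (fun y => by norm_num [Gam] <;> ring)]
    norm_num [DG] <;> ring
  · rw [pderiv_of_eq_cexp 0 0 (fun y => by norm_num [Gam] <;> ring)]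
    norm_num [DG] <;> ring
  · rw [pderiv_of_eq_cexp 0 0 (fun y => by norm_num [Gam] <;> ring)]
    norm_num [DG] <;> ring
  · rw [pderiv_of_eq_cexp 0 0 (fun y => by norm_num [Gam] <;> ring)]
    norm_num [DG] <;> ring
  · rw [pderiv_of_eq_cexp 0 0 (fun y => by norm_num [Gam] <;> ring)]
    norm_num [DG] <;> ring
  · rw [pderiv_of_eq_cexp 0 0 (fun y => by norm_num [Gam] <;> ring)]
    norm_num [DG] <;> ring
  · rw [pderiv_of_eq_cexp 0 0 (fun y => by norm_num [Gam] <;> ring)]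
    norm_num [DG] <;> ring
  · rw [pderiv_of_eq_cexp 0 0 (fun y => by norm_num [Gam] <;> ring)]
    norm_num [DG] <;> ring
  · rw [pderiv_of_eq_cexp 0 0 (fun y => by norm_num [Gam] <;> ring)]
    norm_num [DG] <;> ring
  · rw [pderiv_of_eq_cexp 0 0 (fun y => by norm_num [Gam] <;> ring)]
    norm_num [DG] <;> ring
  · rw [pderiv_of_eq_cexp 0 0 (fun y => by norm_num [Gam] <;> ring)]
    norm_num [DG] <;> ring
  · rw [pderiv_of_eq_cexp 0 0 (fun y => by norm_num [Gam] <;> ring)]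
    norm_num [DG] <;> ring
  · rw [pderiv_of_eq_cexp 0 0 (fun y => by norm_num [Gam] <;> ring)]
    norm_num [DG] <;> ring
  · rw [pderiv_of_eq_cexp 0 0 (fun y => by norm_num [Gam] <;> ring)]
    norm_num [DG] <;> ring
  · rw [pderiv_of_eq_cexp 0 0 (fun y => by norm_num [Gam] <;> ring)]
    norm_num [DG] <;> ring
  · rw [pderiv_of_eq_cexp 0 0 (fun y => by norm_num [Gam] <;> ring)]
    norm_num [DG] <;> ring
  · rw [pderiv_of_eq_cexp 0 0 (fun y => by norm_num [Gam] <;> ring)]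
    norm_num [DG] <;> ring
  · rw [pderiv_of_eq_cexp 0 0 (fun y => by norm_num [Gam] <;> ring)]
    norm_num [DG] <;> ring
  · rw [pderiv_of_eq_cexp 0 0 (fun y => by norm_num [Gam] <;> ring)]
    norm_num [DG] <;> ring
  · rw [pderiv_of_eq_cexp 0 0 (fun y => by norm_num [Gam] <;> ring)]
    norm_num [DG] <;> ring
  · rw [pderiv_of_eq_cexp (1/2) 1 (fun y => by norm_num [Gam] <;> ring)]
    norm_num [DG] <;> ring
  · rw [pderiv_of_eq_cexp 0 0 (fun y => by norm_num [Gam] <;> ring)]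
    norm_num [DG] <;> ring
  · rw [pderiv_of_eq_cexp 1 0 (fun y => by norm_num [Gam] <;> ring)]
    norm_num [DG] <;> ring
  · rw [pderiv_of_eq_cexp (1/2) 1 (fun y => by norm_num [Gam] <;> ring)]
    norm_num [DG] <;> ring
  · rw [pderiv_of_eq_cexp 0 0 (fun y => by norm_num [Gam] <;> ring)]
    norm_num [DG] <;> ring
  · rw [pderiv_of_eq_cexp 0 0 (fun y => by norm_num [Gam] <;> ring)]
    norm_num [DG] <;> ring
  · rw [pderiv_of_eq_cexp 0 0 (fun y => by norm_num [Gam] <;> ring)]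
    norm_num [DG] <;> ring
  · rw [pderiv_of_eq_cexp 0 0 (fun y => by norm_num [Gam] <;> ring)]
    norm_num [DG] <;> ring
  · rw [pderiv_of_eq_cexp 0 0 (fun y => by norm_num [Gam] <;> ring)]
    norm_num [DG] <;> ring
  · rw [pderiv_of_eq_cexp 0 0 (fun y => by norm_num [Gam] <;> ring)]
    norm_num [DG] <;> ring
  · rw [pderiv_of_eq_cexp 0 0 (fun y => by norm_num [Gam] <;> ring)]
    norm_num [DG] <;> ring
  · rw [pderiv_of_eq_cexp 1 0 (fun y => by norm_num [Gam] <;> ring)]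
    norm_num [DG] <;> ring
  · rw [pderiv_of_eq_cexp 0 0 (fun y => by norm_num [Gam] <;> ring)]
    norm_num [DG] <;> ring
  · rw [pderiv_of_eq_cexp 0 0 (fun y => by norm_num [Gam] <;> ring)]
    norm_num [DG] <;> ring
  · rw [pderiv_of_eq_cexp 0 0 (fun y => by norm_num [Gam] <;> ring)]
    norm_num [DG] <;> ring

set_option maxHeartbeats 4000000 in
lemma ricci_godel {a : ℝ} (ha : a ≠ 0) (x : Pt 4) (i j : Fin 4) :
    ricci (godel a) x i j = godelOmega a x i * godelOmega a x j / a^2 := by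
  fin_cases i <;> fin_cases j <;>
    (simp only [ricci, curvUp, Fin.sum_univ_four, christoffel_godel ha, pderiv_Gam];
     simp [Gam, DG, godelOmega, Pi.single_apply, exp_two, Real.exp_neg,
       Matrix.vecHead, Matrix.vecTail];
     try field_simp;
     try ring)

set_option maxHeartbeats 1000000 in
lemma scalar_godel {a : ℝ} (ha : a ≠ 0) (x : Pt 4) :
    scalarCurv (godel a) x = 1/a^2 := by
  simp only [scalarCurv, Fin.sum_univ_four, ginv_godel ha, ricci_godel ha]
  simp [giT, godelOmega, Matrix.vecHead, Matrix.vecTail]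
  field_simp
  ring

def PRt (a : ℝ) (x : Pt 4) : Fin 4 → Fin 4 → ℝ :=
  ![![a/2,0,0,0],![0, a * Real.exp (x 0) * Real.exp (x 0) / 4,0,0],![0,0,0,0],![0,0,0,0]]

set_option maxHeartbeats 16000000 in
lemma riemann3 {a : ℝ} (ha : a ≠ 0) (x : Pt 4) (i j k : Fin 4) :
    riemann (godel a) x 3 i j k
      = godelOmega a x k * PRt a x i j - godelOmega a x j * PRt a x i k := by
  fin_cases i <;> fin_cases j <;> fin_cases k <;>
    (simp only [riemann, curvUp, Fin.sum_univ_four, christoffel_godel ha, pderiv_Gam];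
     simp [Gam, DG, godel, godelOmega, PRt, Pi.single_apply, exp_two, Real.exp_neg,
       Matrix.vecHead, Matrix.vecTail];
     try field_simp;
     try ring)

lemma g3 (a : ℝ) (x : Pt 4) (k : Fin 4) :
    godel a x 3 k = a * godelOmega a x k := by
  fin_cases k <;> simp [godel, godelOmega, Matrix.vecHead, Matrix.vecTail] <;> ring

lemma om3 (a : ℝ) (x : Pt 4) : godelOmega a x 3 = a := by simp [godelOmega]

set_option maxHeartbeats 1000000 in
lemma weyl3 {a : ℝ} (ha : a ≠ 0) (x : Pt 4) (i j k : Fin 4) :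
    weyl (godel a) x 3 i j k
      = godelOmega a x k * (PRt a x i j
          - (1/(2*a)) * (godel a x i j + godelOmega a x i * godelOmega a x j)
          + (1/(6*a)) * godel a x i j)
        - godelOmega a x j * (PRt a x i k
          - (1/(2*a)) * (godel a x i k + godelOmega a x i * godelOmega a x k)
          + (1/(6*a)) * godel a x i k) := by
  simp only [weyl, kn, Gten, riemann3 ha, ricci_godel ha, scalar_godel ha, g3, om3]
  norm_num
  field_simp
  ring

set_option maxHeartbeats 1000000 in
lemma key_contract {a : ℝ} (ha : a ≠ 0) (x : Pt 4) (F : Fin 4 → ℝ) :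
    (∑ r, ∑ s, godelOmega a x r * ginv (godel a) x r s * F s) = (1/a) * F 3 := by
  simp only [Fin.sum_univ_four, ginv_godel ha]
  simp [giT, godelOmega, Matrix.vecHead, Matrix.vecTail]
  field_simp
  ring

/-- The 1-form `ω = (0, a e^{x¹}, 0, a)` is Riemann compatible and
Weyl compatible for the Gödel metric:
`ω_r g^{rs}(ω_h T_{sijk} + ω_j T_{sikh} + ω_k T_{sihj}) = 0` for `T = R` and `T = C`. -/
theorem godel_omega_compatible (a : ℝ) (ha : 0 < a) :
    ∀ (x : Pt 4) (h i j k : Fin 4),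
      (∑ r, ∑ s, godelOmega a x r * ginv (godel a) x r s *
        (godelOmega a x h * riemann (godel a) x s i j k
          + godelOmega a x j * riemann (godel a) x s i k h
          + godelOmega a x k * riemann (godel a) x s i h j) = 0) ∧
      (∑ r, ∑ s, godelOmega a x r * ginv (godel a) x r s *
        (godelOmega a x h * weyl (godel a) x s i j k
          + godelOmega a x j * weyl (godel a) x s i k h
          + godelOmega a x k * weyl (godel a) x s i h j) = 0) := by
  intro x h i j k
  have ha' : a ≠ 0 := ne_of_gt ha
  constructor
  · rw [key_contract ha']
    rw [riemann3 ha', riemann3 ha', riemann3 ha']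
    ring
  · rw [key_contract ha']
    rw [weyl3 ha', weyl3 ha', weyl3 ha']
    ring
end
end
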